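/- Monotone decrease of constraint residual in Bregman iteration: let E be convex, and suppose w_{k+1} minimizes w ↦ D_E^{p_k}(w, w_k) + (λ/2)||Aw - b||² with p_k ∈ ∂E(w_k). Then ||Aw_{k+1} - b||₂² ≤ ||Aw_k - b||₂². -/

import Mathlib

open Finset

/-- `bregmanDist E p v w` is `D_E^p(w, v)`. -/
def bregmanDist {ι : Type*} [Fintype ι] (E : (ι → ℝ) → ℝ) (p v w : ι → ℝ) : ℝ :=
  E w - E v - ∑ i, p i * (w i - v i)

theorem bregmanDist_self {ι : Type*} [Fintype ι] (E : (ι → ℝ) → ℝ) (p v : ι → ℝ) :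
    bregmanDist E p v v = 0 := by
  simp [bregmanDist]

theorem bregmanDist_nonneg {ι : Type*} [Fintype ι] {E : (ι → ℝ) → ℝ} {p v : ι → ℝ}
    (hp : ∀ x, E x ≥ E v + ∑ i, p i * (x i - v i)) (w : ι → ℝ) :
    0 ≤ bregmanDist E p v w := by
  unfold bregmanDist
  linarith [hp w]

theorem le_of_add_mul_le_add_mul {α : Type*} {D f : α → ℝ} {c : ℝ} (hc : 0 < c) {x y : α}
    (hDx : 0 ≤ D x) (hDy : D y = 0) (hmin : D x + c * f x ≤ D y + c * f y) :
    f x ≤ f y := by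
  have : c * f x ≤ c * f y := by linarith
  exact le_of_mul_le_mul_left this hc

theorem bregman_residual_decrease_general (m n : ℕ) (E : (Fin n → ℝ) → ℝ)
    (A : Matrix (Fin m) (Fin n) ℝ) (b : Fin m → ℝ) (lam : ℝ) (hlam : 0 < lam)
    (wk pk : Fin n → ℝ)
    (hpk : ∀ x : Fin n → ℝ, E x ≥ E wk + ∑ i, pk i * (x i - wk i))
    (wk1 : Fin n → ℝ)
    (hmin : ∀ w : Fin n → ℝ,
      (E wk1 - E wk - ∑ i, pk i * (wk1 i - wk i)) +
        (lam / 2) * ∑ j, (A.mulVec wk1 j - b j) ^ 2 ≤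
      (E w - E wk - ∑ i, pk i * (w i - wk i)) +
        (lam / 2) * ∑ j, (A.mulVec w j - b j) ^ 2) :
    ∑ j, (A.mulVec wk1 j - b j) ^ 2 ≤ ∑ j, (A.mulVec wk j - b j) ^ 2 :=
  le_of_add_mul_le_add_mul (D := bregmanDist E pk wk)
    (f := fun w => ∑ j, (A.mulVec w j - b j) ^ 2) (half_pos hlam)
    (bregmanDist_nonneg hpk wk1) (bregmanDist_self E pk wk) (hmin wk)

theorem bregman_residual_decrease (m n : ℕ) (E : (Fin n → ℝ) → ℝ)
    (hE : ConvexOn ℝ Set.univ E)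
    (A : Matrix (Fin m) (Fin n) ℝ) (b : Fin m → ℝ) (lam : ℝ) (hlam : 0 < lam)
    (wk pk : Fin n → ℝ)
    (hpk : ∀ x : Fin n → ℝ, E x ≥ E wk + ∑ i, pk i * (x i - wk i))
    (wk1 : Fin n → ℝ)
    (hmin : ∀ w : Fin n → ℝ,
      (E wk1 - E wk - ∑ i, pk i * (wk1 i - wk i)) +
        (lam / 2) * ∑ j, (A.mulVec wk1 j - b j) ^ 2 ≤
      (E w - E wk - ∑ i, pk i * (w i - wk i)) +
        (lam / 2) * ∑ j, (A.mulVec w j - b j) ^ 2) :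
    ∑ j, (A.mulVec wk1 j - b j) ^ 2 ≤ ∑ j, (A.mulVec wk j - b j) ^ 2 :=
  bregman_residual_decrease_general m n E A b lam hlam wk pk hpk wk1 hmin
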